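/- Let 𝓛: H → ℝ be differentiable, μ-strongly convex with L-Lipschitz gradient, where 0 < μ ≤ L, on a real inner product space H, with global minimizer θ⋆. Let (θ^{(t)})_{t≥1}, (e^{(t)})_{t≥1} satisfy θ^{(t+1)} = θ^{(t)} − (1/L)(∇𝓛(θ^{(t)}) − e^{(t)}) for all t ≥ 1, and let N > 0, D^{(t)} ≥ 0 satisfy ‖e^{(t)}‖² ≤ 2N·D^{(t)} for all t. Then limsup_{t→∞} [ (𝓛(θ^{(t+1)}) − 𝓛(θ⋆)) − Σ_{t'=1}^{t} (1 − μ/L)^{t−t'} (N/L) D^{(t')} ] ≤ 0; in particular, the term (1 − μ/L)^t (𝓛(θ^{(1)}) − 𝓛(θ⋆)) tends to 0 as t → ∞. -/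

import Mathlib

open scoped RealInnerProductSpace

lemma descent_lemma {H : Type*} [NormedAddCommGroup H] [InnerProductSpace ℝ H] [CompleteSpace H]
    (𝓛 : H → ℝ) (g : H → H) (L : ℝ)
    (hgrad : ∀ x, HasGradientAt 𝓛 (g x) x)
    (hlip : ∀ x y, ‖g x - g y‖ ≤ L * ‖x - y‖) (x y : H) :
    𝓛 y ≤ 𝓛 x + ⟪g x, y - x⟫ + L / 2 * ‖y - x‖ ^ 2 := by
  set v := y - x with hv
  have hline : ∀ s : ℝ, HasDerivAt (fun s : ℝ => 𝓛 (x + s • v)) ⟪g (x + s • v), v⟫ s := by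
    intro s
    have h1 : HasDerivAt (fun s : ℝ => x + s • v) v s := by
      simpa using ((hasDerivAt_id s).smul_const v).const_add x
    have h2 := ((hgrad (x + s • v)).hasFDerivAt.comp_hasDerivAt s h1)
    simp [InnerProductSpace.toDual_apply_apply] at h2
    exact h2
  set a := ⟪g x, v⟫ with ha
  set b := ‖v‖ ^ 2 with hb
  set φ : ℝ → ℝ := fun s => 𝓛 (x + s • v) - (a * s + L * b / 2 * s ^ 2) with hφdef
  have hφ : ∀ s : ℝ, HasDerivAt φ (⟪g (x + s • v), v⟫ - (a + L * b * s)) s := by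
    intro s
    have h3 : HasDerivAt (fun s : ℝ => a * s + L * b / 2 * s ^ 2) (a + L * b * s) s := by
      have := ((hasDerivAt_id s).const_mul a).add (((hasDerivAt_pow 2 s)).const_mul (L * b / 2))
      exact this.congr_deriv (by ring)
    exact (hline s).sub h3
  have hanti : AntitoneOn φ (Set.Icc 0 1) := by
    apply antitoneOn_of_deriv_nonpos (convex_Icc 0 1)
    · exact fun s _ => ((hφ s).differentiableAt).continuousAt.continuousWithinAt
    · exact fun s _ => ((hφ s).differentiableAt).differentiableWithinAt
    · intro s hs
      rw [interior_Icc] at hs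
      rw [(hφ s).deriv]
      have key : ⟪g (x + s • v) - g x, v⟫ ≤ L * b * s := by
        calc ⟪g (x + s • v) - g x, v⟫ ≤ ‖g (x + s • v) - g x‖ * ‖v‖ := real_inner_le_norm _ _
        _ ≤ (L * ‖(x + s • v) - x‖) * ‖v‖ := by
            have := hlip (x + s • v) x
            have hvn : (0:ℝ) ≤ ‖v‖ := norm_nonneg _
            nlinarith [hlip (x + s • v) x, norm_nonneg v]
        _ = L * b * s := by
            have : ‖(x + s • v) - x‖ = s * ‖v‖ := by
              simp [norm_smul, abs_of_pos hs.1]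
            rw [this, hb]; ring
      have : ⟪g (x + s • v), v⟫ - a = ⟪g (x + s • v) - g x, v⟫ := by
        rw [inner_sub_left]
      linarith [key, this.ge.trans_eq rfl]
  have h01 : φ 1 ≤ φ 0 := hanti (by norm_num) (by norm_num) (by norm_num)
  have e1 : x + (1:ℝ) • v = y := by simp [hv]
  have e0 : x + (0:ℝ) • v = x := by simp
  simp only [hφdef, e1, e0] at h01
  -- h01 : 𝓛 y - (a * 1 + L*b/2 * 1^2) ≤ 𝓛 x - (a*0 + ...)
  simp at h01
  nlinarith [h01]

/-- Corollary 1 of the paper (deterministic form): asymptotically, the convergence gap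
is bounded by the accumulated weighted distortion; in particular the transient term
`(1 − μ/L)^t (𝓛(θ^{(1)}) − 𝓛(θ⋆))` tends to 0. -/
theorem ofl_asymptotic_convergence
    {H : Type*} [NormedAddCommGroup H] [InnerProductSpace ℝ H] [CompleteSpace H]
    (𝓛 : H → ℝ) (g : H → H) (μ L : ℝ) (hμ : 0 < μ) (hμL : μ ≤ L)
    (hgrad : ∀ x, HasGradientAt 𝓛 (g x) x)
    (hlip : ∀ x y, ‖g x - g y‖ ≤ L * ‖x - y‖)
    (hsc : ∀ x y, 𝓛 y ≥ 𝓛 x + ⟪g x, y - x⟫ + (μ / 2) * ‖y - x‖ ^ 2)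
    (θstar : H) (hmin : ∀ θ', 𝓛 θstar ≤ 𝓛 θ')
    (θ : ℕ → H) (e : ℕ → H)
    (hiter : ∀ t, 1 ≤ t → θ (t + 1) = θ t - (1 / L) • (g (θ t) - e t))
    (N : ℝ) (hN : 0 < N) (D : ℕ → ℝ) (hD : ∀ t, 0 ≤ D t)
    (herr : ∀ t, ‖e t‖ ^ 2 ≤ 2 * N * D t) :
    Filter.limsup
        (fun t =>
          (𝓛 (θ (t + 1)) - 𝓛 θstar) -
            ∑ t' ∈ Finset.Icc 1 t, (1 - μ / L) ^ (t - t') * (N / L) * D t')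
        Filter.atTop ≤ 0 ∧
      Filter.Tendsto (fun t => (1 - μ / L) ^ t * (𝓛 (θ 1) - 𝓛 θstar))
        Filter.atTop (nhds 0) := by
  have hL : (0:ℝ) < L := hμ.trans_le hμL
  set r : ℝ := 1 - μ / L with hrdef
  have hr0 : 0 ≤ r := by
    have : μ / L ≤ 1 := (div_le_one hL).2 hμL
    rw [hrdef]; linarith
  have hr1 : r < 1 := by
    have : 0 < μ / L := div_pos hμ hL
    rw [hrdef]; linarith
  -- PL inequality
  have hPL : ∀ x, 2 * μ * (𝓛 x - 𝓛 θstar) ≤ ‖g x‖ ^ 2 := by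
    intro x
    have h := hsc x θstar
    have hcs : -(‖g x‖ * ‖θstar - x‖) ≤ ⟪g x, θstar - x⟫ := by
      have h1 := abs_real_inner_le_norm (g x) (θstar - x)
      have h2 := neg_abs_le (⟪g x, θstar - x⟫)
      linarith
    nlinarith [h, hcs, sq_nonneg (μ * ‖θstar - x‖ - ‖g x‖), hμ, norm_nonneg (θstar - x),
      norm_nonneg (g x)]
  -- one-step bound
  have hstep : ∀ t, 1 ≤ t →
      𝓛 (θ (t + 1)) - 𝓛 θstar ≤ r * (𝓛 (θ t) - 𝓛 θstar) + (N / L) * D t := by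
    intro t ht
    have hd := descent_lemma 𝓛 g L hgrad hlip (θ t) (θ (t + 1))
    have hδ : θ (t + 1) - θ t = -((1 / L) • (g (θ t) - e t)) := by
      rw [hiter t ht]; abel
    rw [hδ] at hd
    set G := ‖g (θ t)‖ ^ 2 with hG
    set P := ⟪g (θ t), e t⟫ with hP
    set E := ‖e t‖ ^ 2 with hE
    have e2 : ⟪g (θ t), -((1 / L) • (g (θ t) - e t))⟫ = -(1 / L * (G - P)) := by
      rw [inner_neg_right, real_inner_smul_right, inner_sub_right,
        real_inner_self_eq_norm_sq]
    have e3 : ‖-((1 / L) • (g (θ t) - e t))‖ ^ 2 = (1 / L) ^ 2 * (G - 2 * P + E) := by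
      rw [norm_neg, norm_smul, mul_pow]
      have : ‖g (θ t) - e t‖ ^ 2 = G - 2 * P + E := by
        rw [hG, hP, hE, @norm_sub_sq_real]
        try ring
      rw [this]
      simp [abs_of_pos (one_div_pos.2 hL)]
    rw [e2, e3] at hd
    have key : 𝓛 (θ (t + 1)) ≤ 𝓛 (θ t) - G / (2 * L) + E / (2 * L) := by
      have : 𝓛 (θ t) + -(1 / L * (G - P)) + L / 2 * ((1 / L) ^ 2 * (G - 2 * P + E))
          = 𝓛 (θ t) - G / (2 * L) + E / (2 * L) := by field_simp; ring
      linarith [this ▸ hd]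
    have hE2 : E ≤ 2 * N * D t := herr t
    have hGgap : 2 * μ * (𝓛 (θ t) - 𝓛 θstar) ≤ G := hPL (θ t)
    have h2L : (0:ℝ) < 2 * L := by linarith
    have f1 : μ / L * (𝓛 (θ t) - 𝓛 θstar) ≤ G / (2 * L) := by
      have hq2 : 2 * μ * (𝓛 (θ t) - 𝓛 θstar) / (2 * L) ≤ G / (2 * L) :=
        div_le_div_of_nonneg_right hGgap h2L.le
      have he : 2 * μ * (𝓛 (θ t) - 𝓛 θstar) / (2 * L) = μ / L * (𝓛 (θ t) - 𝓛 θstar) := by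
        field_simp
      linarith [hq2, he]
    have f2 : E / (2 * L) ≤ N / L * D t := by
      have hq2 : E / (2 * L) ≤ 2 * N * D t / (2 * L) :=
        div_le_div_of_nonneg_right hE2 h2L.le
      have he : 2 * N * D t / (2 * L) = N / L * D t := by field_simp
      linarith [hq2, he]
    rw [hrdef]
    linarith [key, f1, f2]
  -- accumulated bound by induction
  have hbound : ∀ t, 𝓛 (θ (t + 1)) - 𝓛 θstar ≤
      r ^ t * (𝓛 (θ 1) - 𝓛 θstar) + ∑ t' ∈ Finset.Icc 1 t, r ^ (t - t') * (N / L) * D t' := by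
    intro t
    induction t with
    | zero => simp
    | succ t ih =>
      have hs := hstep (t + 1) (by omega)
      have hsum : ∑ t' ∈ Finset.Icc 1 (t + 1), r ^ (t + 1 - t') * (N / L) * D t'
          = r * (∑ t' ∈ Finset.Icc 1 t, r ^ (t - t') * (N / L) * D t') + N / L * D (t + 1) := by
        rw [Finset.sum_Icc_succ_top (by omega : 1 ≤ t + 1), Finset.mul_sum]
        congr 1
        · refine Finset.sum_congr rfl fun x hx => ?_
          have hx' : x ≤ t := (Finset.mem_Icc.1 hx).2
          have hxe : t + 1 - x = (t - x) + 1 := by omega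
          rw [hxe, pow_succ]; ring
        · simp
      rw [hsum]
      have hmul := mul_le_mul_of_nonneg_left ih hr0
      rw [pow_succ]
      linarith [hs, hmul]
  have htend : Filter.Tendsto (fun t => r ^ t * (𝓛 (θ 1) - 𝓛 θstar))
      Filter.atTop (nhds 0) := by
    have h0 := tendsto_pow_atTop_nhds_zero_of_lt_one hr0 hr1
    simpa using h0.mul_const (𝓛 (θ 1) - 𝓛 θstar)
  refine ⟨?_, htend⟩
  set u : ℕ → ℝ := fun t =>
    (𝓛 (θ (t + 1)) - 𝓛 θstar) - ∑ t' ∈ Finset.Icc 1 t, r ^ (t - t') * (N / L) * D t' with hu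
  have hub : ∀ t, u t ≤ r ^ t * (𝓛 (θ 1) - 𝓛 θstar) := fun t => by
    have := hbound t; simp only [hu]; linarith
  rw [Filter.limsup_eq]
  by_cases hbdd : BddBelow {a | ∀ᶠ n in Filter.atTop, u n ≤ a}
  · refine le_of_forall_pos_le_add fun ε hε => ?_
    rw [zero_add]
    refine csInf_le hbdd ?_
    have hev : ∀ᶠ n in Filter.atTop, r ^ n * (𝓛 (θ 1) - 𝓛 θstar) < ε :=
      htend.eventually (gt_mem_nhds hε)
    exact hev.mono fun n hn => (hub n).trans hn.le
  · rw [Real.sInf_of_not_bddBelow hbdd]
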